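/- Every CL-labeling of a finite bounded poset P has the unique earliest (UE) property. -/

import Mathlib

/-- `l` is a saturated chain from `x` to `y` in the poset `α`:
a list `x = x₀ ⋖ x₁ ⋖ ⋯ ⋖ x_k = y` of elements, each covered by the next. -/
def SatChain {α : Type*} [PartialOrder α] (x y : α) (l : List α) : Prop :=
  l.Chain' (· ⋖ ·) ∧ l.head? = some x ∧ l.getLast? = some y

/-- The label sequence of a saturated chain, read from bottom to top.  Here
`lab r x y` is the label of the cover relation `x ⋖ y` with respect to the root `r`
(a saturated chain from `⊥` to `x` recorded as a list ending in `x`); this encodes a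
chain-edge (CE-) labeling.  The first list argument is the root of the head of the
chain, the second is the chain itself. -/
def labelSeq {α Q : Type*} (lab : List α → α → α → Q) : List α → List α → List Q
  | _, [] => []
  | _, [_] => []
  | r, x :: y :: c => lab r x y :: labelSeq lab (r ++ [y]) (y :: c)

/-- `u ⋖ v ⋖ w` is a topological ascent with respect to the root `r`: the label
sequence of `u ⋖ v ⋖ w` is lexicographically strictly smaller than that of every
other saturated chain from `u` to `w`. -/
def TopAscent {α Q : Type*} [PartialOrder α] [LinearOrder Q]
    (lab : List α → α → α → Q) (r : List α) (u v w : α) : Prop :=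
  u ⋖ v ∧ v ⋖ w ∧ ∀ c, SatChain u w c → c ≠ [u, v, w] →
    List.Lex (· < ·) (labelSeq lab r [u, v, w]) (labelSeq lab r c)

/-- The saturated chain (second argument) is topologically ascending with respect to
the root given as first argument: every consecutive triple on it is a topological
ascent (with respect to the appropriately extended root). -/
def TopAscending {α Q : Type*} [PartialOrder α] [LinearOrder Q]
    (lab : List α → α → α → Q) : List α → List α → Prop
  | r, u :: v :: w :: c => TopAscent lab r u v w ∧ TopAscending lab (r ++ [v]) (v :: w :: c)
  | _, _ => True

/-- `lab` is a CC-labeling: every rooted interval `[u,v]_r` has exactly one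
topologically ascending saturated chain, distinct saturated chains of `[u,v]_r` have
distinct label sequences, and no label sequence is a prefix of another. -/
def IsCCLabeling {α Q : Type*} [PartialOrder α] [OrderBot α] [LinearOrder Q]
    (lab : List α → α → α → Q) : Prop :=
  ∀ u v r, SatChain (⊥ : α) u r → u ≤ v →
    (∃! c, SatChain u v c ∧ TopAscending lab r c) ∧
    (∀ c c', SatChain u v c → SatChain u v c' → c ≠ c' →
      labelSeq lab r c ≠ labelSeq lab r c' ∧
      ¬ labelSeq lab r c <+: labelSeq lab r c')

/-- `lab` is a CL-labeling: every rooted interval `[u,v]_r` has exactly one saturated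
chain with strictly increasing label sequence, and this label sequence is
lexicographically strictly smaller than that of every other saturated chain. -/
def IsCLLabeling {α Q : Type*} [PartialOrder α] [OrderBot α] [LinearOrder Q]
    (lab : List α → α → α → Q) : Prop :=
  ∀ u v r, SatChain (⊥ : α) u r → u ≤ v →
    ∃ c, SatChain u v c ∧ List.Chain' (· < ·) (labelSeq lab r c) ∧
      (∀ c', SatChain u v c' → List.Chain' (· < ·) (labelSeq lab r c') → c' = c) ∧
      (∀ c', SatChain u v c' → c' ≠ c →
        List.Lex (· < ·) (labelSeq lab r c) (labelSeq lab r c'))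

/-- `lab` is a topological CL-labeling: every rooted interval `[u,v]_r` has a unique
saturated chain with lexicographically smallest label sequence, and every other
saturated chain of `[u,v]_r` contains at least one topological descent (i.e. is not
topologically ascending). -/
def IsTopolCLLabeling {α Q : Type*} [PartialOrder α] [OrderBot α] [LinearOrder Q]
    (lab : List α → α → α → Q) : Prop :=
  ∀ u v r, SatChain (⊥ : α) u r → u ≤ v →
    ∃ c, SatChain u v c ∧
      (∀ c', SatChain u v c' → c' ≠ c →
        List.Lex (· < ·) (labelSeq lab r c) (labelSeq lab r c')) ∧
      (∀ c', SatChain u v c' → c' ≠ c → ¬ TopAscending lab r c')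

/-- `lab` has the unique earliest (UE) property: in each rooted interval `[u,v]_r`,
the smallest label on the cover relations upward from `u` occurs on only one such
cover relation. -/
def HasUE {α Q : Type*} [PartialOrder α] [OrderBot α] [LinearOrder Q]
    (lab : List α → α → α → Q) : Prop :=
  ∀ u v r, SatChain (⊥ : α) u r → u ≤ v →
    ∀ a b, u ⋖ a → a ≤ v → u ⋖ b → b ≤ v →
      (∀ a', u ⋖ a' → a' ≤ v → lab r u a ≤ lab r u a') →
      (∀ a', u ⋖ a' → a' ≤ v → lab r u b ≤ lab r u a') → a = b

/-- `lab` is self-consistent: whenever `c₀` is the lexicographically strictly first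
saturated chain of a rooted interval `[u,v]_r`, with `a` the atom on `c₀` and
`b ≠ a` another atom of `[u,v]_r`, then for every `v'` above both `a` and `b`, every
saturated chain of `[u,v']_r` through `b` is lexicographically later than every
saturated chain of `[u,v']_r` through `a`. -/
def SelfConsistent {α Q : Type*} [PartialOrder α] [OrderBot α] [LinearOrder Q]
    (lab : List α → α → α → Q) : Prop :=
  ∀ u v r, SatChain (⊥ : α) u r → ∀ c₀, SatChain u v c₀ →
    (∀ c, SatChain u v c → c ≠ c₀ →
      List.Lex (· < ·) (labelSeq lab r c₀) (labelSeq lab r c)) →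
    ∀ a, u ⋖ a → a ∈ c₀ →
    ∀ b, u ⋖ b → b ≤ v → b ≠ a →
    ∀ v', a ≤ v' → b ≤ v' →
    ∀ ca cb, SatChain u v' ca → a ∈ ca → SatChain u v' cb → b ∈ cb →
      List.Lex (· < ·) (labelSeq lab r ca) (labelSeq lab r cb)

/-!
Let `c₀ = u ⋖ a₀ ⋖ ⋯ ⋖ v` be the increasing chain of `[u,v]_r`. For another atom `b`, extend
the increasing chain of `[b,v]` (rooted at `r` extended by `b`) down to `u`. This chain is
lexicographically later than `c₀`, so `λ(u ⋖ a₀) ≤ λ(u ⋖ b)`. If the two labels were equal,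
the rest of the new chain would be lexicographically at least the rest of `c₀`, so its second
label would exceed `λ(u ⋖ b)` and the new chain would be increasing. Uniqueness of increasing
chains then gives `b = a₀`. So `a₀` is the only atom that carries the smallest label.
-/

theorem List.IsChain.cons_of_lex {Q : Type*} [Preorder Q] {x : Q} {l₁ l₂ : List Q}
    (h₁ : IsChain (· < ·) (x :: l₁)) (hne : l₁ ≠ []) (hlex : Lex (· < ·) l₁ l₂)
    (h₂ : IsChain (· < ·) l₂) : IsChain (· < ·) (x :: l₂) := by
  obtain ⟨y, l₁, rfl⟩ := exists_cons_of_ne_nil hne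
  have hxy : x < y := (isChain_cons_cons.mp h₁).1
  cases hlex with
  | cons => exact h₂.cons_cons hxy
  | rel hyz => exact h₂.cons_cons (hxy.trans hyz)

section SatChain

variable {α : Type*} [PartialOrder α] {x y z : α} {l : List α}

theorem SatChain.exists_eq_cons (h : SatChain x y l) : ∃ l', l = x :: l' := by
  obtain ⟨-, hhead, -⟩ := h
  rcases l with _ | ⟨w, l'⟩
  · simp at hhead
  · exact ⟨l', by simpa using hhead⟩

theorem SatChain.cons (hxy : x ⋖ y) (h : SatChain y z l) : SatChain x z (x :: l) := by
  obtain ⟨l', rfl⟩ := h.exists_eq_cons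
  obtain ⟨hchain, -, hlast⟩ := h
  exact ⟨hchain.cons_cons hxy, rfl, by rwa [List.getLast?_cons_cons]⟩

theorem SatChain.append_singleton (h : SatChain x y l) (hyz : y ⋖ z) :
    SatChain x z (l ++ [z]) := by
  obtain ⟨l', rfl⟩ := h.exists_eq_cons
  obtain ⟨hchain, -, hlast⟩ := h
  refine ⟨List.isChain_append.mpr ⟨hchain, List.isChain_singleton z, ?_⟩, rfl,
    List.getLast?_concat⟩
  intro w hw z' hz'
  rw [hlast, Option.mem_some_iff] at hw
  rw [List.head?_singleton, Option.mem_some_iff] at hz'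
  exact hw ▸ hz' ▸ hyz

theorem SatChain.exists_eq_cons_cons (h : SatChain x y l) (hxy : x ≠ y) :
    ∃ z l', l = x :: z :: l' ∧ x ⋖ z ∧ SatChain z y (z :: l') := by
  obtain ⟨l, rfl⟩ := h.exists_eq_cons
  obtain ⟨hchain, -, hlast⟩ := h
  rcases l with _ | ⟨z, l'⟩
  · exact absurd (by simpa using hlast) hxy
  · rw [List.getLast?_cons_cons] at hlast
    exact ⟨z, l', rfl, (List.isChain_cons_cons.mp hchain).1,
      (List.isChain_cons_cons.mp hchain).2, rfl, hlast⟩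

theorem SatChain.le (h : SatChain x y l) : x ≤ y := by
  induction l generalizing x with
  | nil => exact absurd h.2.1 (by simp)
  | cons w t ih =>
    by_cases hxy : x = y
    · exact hxy.le
    obtain ⟨z, l', hl, hxz, hz⟩ := h.exists_eq_cons_cons hxy
    obtain rfl : t = z :: l' := (List.cons.inj hl).2
    exact hxz.le.trans (ih hz)

end SatChain

theorem IsCLLabeling.lab_lt_of_ne {α Q : Type*} [PartialOrder α] [OrderBot α] [LinearOrder Q]
    {lab : List α → α → α → Q} (hcl : IsCLLabeling lab) {u v a b : α} {r l : List α}
    (hr : SatChain ⊥ u r) (hc : SatChain u v (u :: a :: l))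
    (hinc : List.IsChain (· < ·) (labelSeq lab r (u :: a :: l)))
    (hub : u ⋖ b) (hbv : b ≤ v) (hba : b ≠ a) : lab r u a < lab r u b := by
  have hua : u ⋖ a := (List.isChain_cons_cons.mp hc.1).1
  have hl : l ≠ [] := by
    rintro rfl
    obtain rfl : a = v := by simpa using hc.2.2
    exact hua.2 hub.lt (lt_of_le_of_ne hbv hba)
  obtain ⟨c, -, -, huniq, hlex⟩ := hcl u v r hr (hub.le.trans hbv)
  obtain rfl : u :: a :: l = c := huniq _ hc hinc
  obtain ⟨d, hd, hdinc, -, -⟩ := hcl b v (r ++ [b]) (hr.append_singleton hub) hbv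
  obtain ⟨d, rfl⟩ := hd.exists_eq_cons
  have hbd : SatChain u v (u :: b :: d) := hd.cons hub
  have hne : u :: b :: d ≠ u :: a :: l := by simp [hba]
  rcases List.cons_lex_cons_iff.mp (hlex _ hbd hne) with hlt | ⟨heq, htail⟩
  · exact hlt
  · have hbd_inc : List.IsChain (· < ·) (labelSeq lab r (u :: b :: d)) := by
      rw [labelSeq, ← heq]
      refine hinc.cons_of_lex ?_ htail hdinc
      obtain ⟨z, l', rfl⟩ := List.exists_cons_of_ne_nil hl
      simp [labelSeq]
    exact absurd (huniq _ hbd hbd_inc) hne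

theorem stmt_13_general {α Q : Type*} [PartialOrder α] [BoundedOrder α]
    [LinearOrder Q] (lab : List α → α → α → Q) (hcl : IsCLLabeling lab) :
    HasUE lab := by
  intro u v r hr huv a b hua hav hub hbv ha_min hb_min
  obtain ⟨c, hc, hinc, -, -⟩ := hcl u v r hr huv
  obtain ⟨a₀, l, rfl, hua₀, ha₀⟩ := hc.exists_eq_cons_cons (hua.lt.trans_le hav).ne
  have eq_a₀ : ∀ x, u ⋖ x → x ≤ v →
      (∀ a', u ⋖ a' → a' ≤ v → lab r u x ≤ lab r u a') → x = a₀ :=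
    fun x hux hxv hmin => by_contra fun hne =>
      (hmin a₀ hua₀ ha₀.le).not_gt (hcl.lab_lt_of_ne hr hc hinc hux hxv hne)
  rw [eq_a₀ a hua hav ha_min, eq_a₀ b hub hbv hb_min]

/-- Every CL-labeling of a finite bounded poset has the unique earliest (UE)
property. -/
theorem stmt_13 {α Q : Type*} [PartialOrder α] [BoundedOrder α] [Fintype α]
    [LinearOrder Q] (lab : List α → α → α → Q) (hcl : IsCLLabeling lab) :
    HasUE lab :=
  stmt_13_general lab hcl
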